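/- Assume X, W, A, S all have nonnegative entries. Fix indices i, j with 1 ≤ i, j ≤ q, and assume A_{ij} > 0 and (Wᵀ·W·A·S·Sᵀ)_{ij} > 0. Let a* = A_{ij} · (Wᵀ·X·Sᵀ)_{ij} / (Wᵀ·W·A·S·Sᵀ)_{ij} and let A* be the matrix that agrees with A except that its (i,j) entry is replaced by a*. Then the objective does not increase under this multiplicative update: D(W, A*, S) ≤ D(W, A, S). -/

import Mathlib

open Matrix

/-- The GBR-NMF objective `D(W,A,S) = ‖X − W·A·S‖_F² = Tr((X − WAS)(X − WAS)ᵀ)`. -/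
noncomputable def objD {n p q : ℕ} (X : Matrix (Fin n) (Fin p) ℝ)
    (W : Matrix (Fin n) (Fin q) ℝ) (A : Matrix (Fin q) (Fin q) ℝ)
    (S : Matrix (Fin q) (Fin p) ℝ) : ℝ :=
  Matrix.trace ((X - W * A * S) * (X - W * A * S)ᵀ)

/-- The matrix agreeing with `M` except that its `(i,j)` entry is replaced by `w`. -/
def updEntry {m k : ℕ} (M : Matrix (Fin m) (Fin k) ℝ) (i : Fin m) (j : Fin k) (w : ℝ) :
    Matrix (Fin m) (Fin k) ℝ :=
  fun a b => if a = i ∧ b = j then w else M a b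

/-!
Changing the entry `A_{ij}` by `t` moves `W·A·S` along the rank-one direction `W·E_{ij}·S`,
so `t ↦ D(W, A + t E_{ij}, S)` is the quadratic `D(W,A,S) − 2t (g − h) + t² α`, where
`g = (WᵀXSᵀ)_{ij}`, `h = (WᵀWASSᵀ)_{ij}` and `α = (WᵀW)_{ii} (SSᵀ)_{jj}`.
The update is the step `t = A_{ij}(g − h)/h`, at which the change equals
`A_{ij}(g − h)²/h² · (α A_{ij} − 2h)`. By nonnegativity `α A_{ij}` is one of the terms of
`h = Σ_{k,l} (WᵀW)_{ik} A_{kl} (SSᵀ)_{lj}`, so `α A_{ij} ≤ h` and the change is `≤ 0`.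
-/

namespace Matrix

section Single

variable {l m n o R : Type*} [Fintype m] [Fintype n] [DecidableEq m] [DecidableEq n]
  [CommSemiring R]

theorem mul_single_one_mul_apply (W : Matrix l m R) (S : Matrix n o R) (i : m) (j : n)
    (a : l) (b : o) : (W * single i j (1 : R) * S) a b = W a i * S j b := by
  simp [mul_apply, single, ite_and]

theorem trace_mul_transpose_mul_single_mul [Fintype l] [Fintype o] (N : Matrix l o R)
    (W : Matrix l m R) (S : Matrix n o R) (i : m) (j : n) :
    trace (N * (W * single i j (1 : R) * S)ᵀ) = (Wᵀ * N * Sᵀ) i j := by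
  rw [transpose_mul, transpose_mul, transpose_single, ← Matrix.mul_assoc, ← Matrix.mul_assoc,
    trace_mul_comm, ← Matrix.mul_assoc, trace_mul_comm, trace_single_mul, one_smul]
  simp only [Matrix.mul_assoc]

end Single

theorem trace_sub_smul_mul_transpose_sub_smul {m n R : Type*} [Fintype m] [Fintype n]
    [CommRing R] (N M : Matrix m n R) (t : R) :
    trace ((N - t • M) * (N - t • M)ᵀ)
      = trace (N * Nᵀ) - 2 * t * trace (N * Mᵀ) + t ^ 2 * trace (M * Mᵀ) := by
  have hsymm : trace (M * Nᵀ) = trace (N * Mᵀ) := by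
    rw [← trace_transpose, transpose_mul, transpose_transpose]
  simp only [transpose_sub, transpose_smul, Matrix.sub_mul, Matrix.mul_sub, Matrix.smul_mul,
    Matrix.mul_smul, trace_sub, trace_smul, smul_eq_mul, hsymm]
  ring

theorem mul_apply_nonneg {l m n R : Type*} [Fintype m] [Semiring R] [PartialOrder R]
    [IsOrderedRing R] {M : Matrix l m R} {N : Matrix m n R} (hM : ∀ a b, 0 ≤ M a b)
    (hN : ∀ a b, 0 ≤ N a b) (a : l) (b : n) : 0 ≤ (M * N) a b :=
  Finset.sum_nonneg fun k _ => mul_nonneg (hM a k) (hN k b)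

theorem mul_apply_mul_apply_le_mul_mul_apply {l m n o R : Type*} [Fintype m] [Fintype n]
    [Semiring R] [PartialOrder R] [IsOrderedRing R] {P : Matrix l m R} {A : Matrix m n R}
    {Q : Matrix n o R} (hP : ∀ a b, 0 ≤ P a b) (hA : ∀ a b, 0 ≤ A a b)
    (hQ : ∀ a b, 0 ≤ Q a b) (i : l) (k : m) (k' : n) (j : o) :
    P i k * A k k' * Q k' j ≤ (P * A * Q) i j := by
  have hPA : P i k * A k k' ≤ (P * A) i k' :=
    Finset.single_le_sum (f := fun c => P i c * A c k')
      (fun c _ => mul_nonneg (hP i c) (hA c k')) (Finset.mem_univ k)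
  calc P i k * A k k' * Q k' j ≤ (P * A) i k' * Q k' j :=
        mul_le_mul_of_nonneg_right hPA (hQ k' j)
    _ ≤ (P * A * Q) i j :=
        Finset.single_le_sum (f := fun c => (P * A) i c * Q c j)
          (fun c _ => mul_nonneg (mul_apply_nonneg hP hA i c) (hQ c j)) (Finset.mem_univ k')

end Matrix

theorem updEntry_eq_add_smul_single {m k : ℕ} (M : Matrix (Fin m) (Fin k) ℝ) (i : Fin m)
    (j : Fin k) (w : ℝ) : updEntry M i j w = M + (w - M i j) • single i j (1 : ℝ) := by
  ext a b
  simp only [updEntry, Matrix.add_apply, Matrix.smul_apply, single_apply, eq_comm (a := i),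
    eq_comm (a := j), smul_eq_mul]
  split_ifs with h
  · obtain ⟨rfl, rfl⟩ := h
    ring
  · ring

theorem objD_add_smul_single {n p q : ℕ} (X : Matrix (Fin n) (Fin p) ℝ)
    (W : Matrix (Fin n) (Fin q) ℝ) (A : Matrix (Fin q) (Fin q) ℝ)
    (S : Matrix (Fin q) (Fin p) ℝ) (i j : Fin q) (t : ℝ) :
    objD X W (A + t • single i j (1 : ℝ)) S = objD X W A S
      - 2 * t * ((Wᵀ * X * Sᵀ) i j - (Wᵀ * W * A * S * Sᵀ) i j)
      + t ^ 2 * ((Wᵀ * W) i i * (S * Sᵀ) j j) := by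
  have hdir : X - W * (A + t • single i j (1 : ℝ)) * S
      = (X - W * A * S) - t • (W * single i j (1 : ℝ) * S) := by
    rw [Matrix.mul_add, Matrix.add_mul, Matrix.mul_smul, Matrix.smul_mul]
    abel
  have hcross : trace ((X - W * A * S) * (W * single i j (1 : ℝ) * S)ᵀ)
      = (Wᵀ * X * Sᵀ) i j - (Wᵀ * W * A * S * Sᵀ) i j := by
    rw [trace_mul_transpose_mul_single_mul]
    simp only [Matrix.mul_sub, Matrix.sub_mul, Matrix.sub_apply, Matrix.mul_assoc]
  have hsq : trace ((W * single i j (1 : ℝ) * S) * (W * single i j (1 : ℝ) * S)ᵀ)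
      = (Wᵀ * W) i i * (S * Sᵀ) j j := by
    rw [trace_mul_transpose_mul_single_mul, ← mul_single_one_mul_apply]
    simp only [Matrix.mul_assoc]
  rw [objD, hdir, trace_sub_smul_mul_transpose_sub_smul, hcross, hsq, objD]

theorem sq_mul_sub_two_mul_nonpos {α a b d : ℝ} (ha : 0 ≤ a) (hd : 0 < d)
    (hαa : α * a ≤ 2 * d) : (a * b / d) ^ 2 * α - 2 * (a * b / d) * b ≤ 0 := by
  have hfactor : (a * b / d) ^ 2 * α - 2 * (a * b / d) * b
      = a * (b / d) ^ 2 * (α * a - 2 * d) := by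
    field_simp
  rw [hfactor]
  exact mul_nonpos_of_nonneg_of_nonpos (by positivity) (by linarith)

theorem objective_nonincreasing_A_update_general
    (n p q : ℕ)
    (X : Matrix (Fin n) (Fin p) ℝ) (W : Matrix (Fin n) (Fin q) ℝ)
    (A : Matrix (Fin q) (Fin q) ℝ) (S : Matrix (Fin q) (Fin p) ℝ)
    (hW : ∀ i j, 0 ≤ W i j)
    (hA : ∀ i j, 0 ≤ A i j) (hS : ∀ i j, 0 ≤ S i j)
    (i j : Fin q)
    (hpos : 0 < A i j) (hden : 0 < (Wᵀ * W * A * S * Sᵀ) i j) :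
    objD X W (updEntry A i j (A i j * (Wᵀ * X * Sᵀ) i j / (Wᵀ * W * A * S * Sᵀ) i j)) S
      ≤ objD X W A S := by
  set g := (Wᵀ * X * Sᵀ) i j
  set h := (Wᵀ * W * A * S * Sᵀ) i j
  have hWW : ∀ a b, 0 ≤ (Wᵀ * W) a b := mul_apply_nonneg (fun a b => hW b a) hW
  have hSS : ∀ a b, 0 ≤ (S * Sᵀ) a b := mul_apply_nonneg hS (fun a b => hS b a)
  have hdiag : (Wᵀ * W) i i * (S * Sᵀ) j j * A i j ≤ h :=
    calc (Wᵀ * W) i i * (S * Sᵀ) j j * A i j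
        _ = (Wᵀ * W) i i * A i j * (S * Sᵀ) j j := by ring
        _ ≤ (Wᵀ * W * A * (S * Sᵀ)) i j :=
          mul_apply_mul_apply_le_mul_mul_apply hWW hA hSS i i j j
        _ = h := by simp only [h, Matrix.mul_assoc]
  have hchange := sq_mul_sub_two_mul_nonpos (b := g - h) hpos.le hden (hdiag.trans (by linarith))
  have hstep : A i j * g / h - A i j = A i j * (g - h) / h := by field_simp
  rw [updEntry_eq_add_smul_single, objD_add_smul_single, hstep]
  linarith

/-- The multiplicative update of the `(i,j)` entry of `A`,
`a* = A_{ij} · (Wᵀ·X·Sᵀ)_{ij} / (Wᵀ·W·A·S·Sᵀ)_{ij}`, does not increase the objective. -/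
theorem objective_nonincreasing_A_update
    (n p q : ℕ)
    (X : Matrix (Fin n) (Fin p) ℝ) (W : Matrix (Fin n) (Fin q) ℝ)
    (A : Matrix (Fin q) (Fin q) ℝ) (S : Matrix (Fin q) (Fin p) ℝ)
    (hX : ∀ i j, 0 ≤ X i j) (hW : ∀ i j, 0 ≤ W i j)
    (hA : ∀ i j, 0 ≤ A i j) (hS : ∀ i j, 0 ≤ S i j)
    (i j : Fin q)
    (hpos : 0 < A i j) (hden : 0 < (Wᵀ * W * A * S * Sᵀ) i j) :
    objD X W (updEntry A i j (A i j * (Wᵀ * X * Sᵀ) i j / (Wᵀ * W * A * S * Sᵀ) i j)) S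
      ≤ objD X W A S :=
  objective_nonincreasing_A_update_general n p q X W A S hW hA hS i j hpos hden
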